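/- Let (g,ρ,V,𝒱,B₀) be a standard pentad, L = L(g,ρ,V,𝒱,B₀) the associated graded Lie algebra, and (π, U) a g-module. Let Ũ⁺ = ⊕_{m≥0} U⁺_m be the positive extension of U with respect to the pentad, an L-module. Then Ũ⁺ is irreducible as an L-module if and only if U is irreducible as a g-module. -/

import Mathlib

/-- A **standard pentad** `(g, ρ, V, 𝒱, B₀)` in the abstract-dual formulation: a Lie algebra
`g` with a non-degenerate invariant bilinear form `B`, representations `ρ` on `V` and `ϱ`
on `W` (with `W` playing the role of the `g`-submodule `𝒱 ⊆ Hom(V, k)`, realized via the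
non-degenerate pairing `pair`, so that `ϱ` is the canonical dual action), together with a
Φ-map `Φ`. -/
structure PentadStruct (k g V W : Type*) [Field k] [LieRing g] [LieAlgebra k g]
    [AddCommGroup V] [Module k V] [AddCommGroup W] [Module k W] where
  ρ : g →ₗ[k] V →ₗ[k] V
  rep_ρ : ∀ a b : g, ρ ⁅a, b⁆ = ρ a ∘ₗ ρ b - ρ b ∘ₗ ρ a
  ϱ : g →ₗ[k] W →ₗ[k] W
  rep_ϱ : ∀ a b : g, ϱ ⁅a, b⁆ = ϱ a ∘ₗ ϱ b - ϱ b ∘ₗ ϱ a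
  pair : V →ₗ[k] W →ₗ[k] k
  pair_compat : ∀ (a : g) (v : V) (w : W), pair (ρ a v) w = - pair v (ϱ a w)
  pair_nondeg_left : ∀ v : V, (∀ w : W, pair v w = 0) → v = 0
  pair_nondeg_right : ∀ w : W, (∀ v : V, pair v w = 0) → w = 0
  B : g →ₗ[k] g →ₗ[k] k
  B_nondeg_left : ∀ a : g, (∀ b : g, B a b = 0) → a = 0
  B_nondeg_right : ∀ b : g, (∀ a : g, B a b = 0) → b = 0
  B_invariant : ∀ a b c : g, B ⁅a, b⁆ c = B a ⁅b, c⁆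
  Φ : V →ₗ[k] W →ₗ[k] g
  Φ_compat : ∀ (a : g) (v : V) (w : W), B a (Φ v w) = pair (ρ a v) w

/-- The graded Lie algebra `L(g, ρ, V, 𝒱, B₀) = ⊕ₙ Vₙ` associated with a standard pentad,
characterized by its defining properties: it is ℤ-graded, its degrees `0`, `1`, `-1` are the
images of `g`, `V`, `𝒱` (compatibly with the Lie structures and the Φ-map), the higher graded
pieces satisfy `V_{i+1} = [V₁, V_i]`, `V_{-i-1} = [V₋₁, V₋ᵢ]` for `i ≥ 1`, and elements of
`Vₙ`, `|n| ≥ 2`, are by construction (as homomorphisms) determined by their brackets with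
`V_{∓1}`. -/
structure AssocGradedLieAlgebra (k g V W : Type*) [Field k] [LieRing g] [LieAlgebra k g]
    [AddCommGroup V] [Module k V] [AddCommGroup W] [Module k W]
    (P : PentadStruct k g V W) (L : Type*) [LieRing L] [LieAlgebra k L] where
  grading : ℤ → Submodule k L
  isInternal : DirectSum.IsInternal grading
  lie_mem : ∀ (n m : ℤ), ∀ x ∈ grading n, ∀ y ∈ grading m, ⁅x, y⁆ ∈ grading (n + m)
  ιg : g →ₗ[k] L
  ιV : V →ₗ[k] L
  ιW : W →ₗ[k] L
  ιg_inj : Function.Injective ιg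
  ιV_inj : Function.Injective ιV
  ιW_inj : Function.Injective ιW
  ιg_range : LinearMap.range ιg = grading 0
  ιV_range : LinearMap.range ιV = grading 1
  ιW_range : LinearMap.range ιW = grading (-1)
  ιg_lie : ∀ a b : g, ιg ⁅a, b⁆ = ⁅ιg a, ιg b⁆
  lie_ιV : ∀ (a : g) (v : V), ⁅ιg a, ιV v⁆ = ιV (P.ρ a v)
  lie_ιW : ∀ (a : g) (w : W), ⁅ιg a, ιW w⁆ = ιW (P.ϱ a w)
  lie_Φ : ∀ (v : V) (w : W), ⁅ιV v, ιW w⁆ = ιg (P.Φ v w)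
  span_pos : ∀ i : ℤ, 1 ≤ i → grading (i + 1)
    = Submodule.span k {z : L | ∃ x ∈ grading 1, ∃ y ∈ grading i, z = ⁅x, y⁆}
  span_neg : ∀ i : ℤ, 1 ≤ i → grading (-i - 1)
    = Submodule.span k {z : L | ∃ x ∈ grading (-1), ∃ y ∈ grading (-i), z = ⁅x, y⁆}
  trans_pos : ∀ n : ℤ, 2 ≤ n → ∀ x ∈ grading n, (∀ y ∈ grading (-1), ⁅x, y⁆ = 0) → x = 0
  trans_neg : ∀ n : ℤ, 2 ≤ n → ∀ x ∈ grading (-n), (∀ y ∈ grading 1, ⁅x, y⁆ = 0) → x = 0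

/-- The **positive extension** `Ũ⁺ = ⊕_{m≥0} U⁺ₘ` of the `g`-module `U⁺₀` with respect to a
standard pentad, as an `L`-module: it is positively graded, transitive, and generated by
`V₀`, `V₁` and `U⁺₀` (i.e. `U⁺_{m+1} = V₁ · U⁺ₘ`). -/
structure PositiveExtension (k g V W : Type*) [Field k] [LieRing g] [LieAlgebra k g]
    [AddCommGroup V] [Module k V] [AddCommGroup W] [Module k W]
    (P : PentadStruct k g V W) (L : Type*) [LieRing L] [LieAlgebra k L]
    (A : AssocGradedLieAlgebra k g V W P L)
    (M : Type*) [AddCommGroup M] [Module k M] [LieRingModule L M] [LieModule k L M] where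
  grading : ℤ → Submodule k M
  isInternal : DirectSum.IsInternal grading
  zero_of_neg : ∀ n : ℤ, n < 0 → grading n = ⊥
  lie_mem : ∀ (n m : ℤ), ∀ x ∈ A.grading n, ∀ u ∈ grading m, ⁅x, u⁆ ∈ grading (n + m)
  transitive : ∀ m : ℤ, 1 ≤ m → ∀ u ∈ grading m,
    (∀ y ∈ A.grading (-1), ⁅y, u⁆ = 0) → u = 0
  span_step : ∀ m : ℤ, 0 ≤ m → grading (m + 1)
    = Submodule.span k {w : M | ∃ x ∈ A.grading 1, ∃ u ∈ grading m, w = ⁅x, u⁆}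

/-!
If `U` is irreducible and `N` is a nonzero `L`-submodule of `Ũ⁺`, transitivity says that the
elements of `Ũ⁺` killed by `V₋₁` all lie in `U`; lowering a nonzero element of `N` by `V₋₁`
until this happens produces a nonzero element of `N ∩ U`. Hence `N ⊇ U`, and `N = Ũ⁺` since
`Ũ⁺` is generated by `U` under `V₁`.

Conversely, a `g`-submodule `N ⊆ U` generates the `L`-submodule `⨆ₘ V₁ᵐ · N`: its stabilizer in
`L` is a Lie subalgebra containing `V₋₁`, `V₀`, `V₁`, hence all of `L`. Its degree-`0` part is
`N`, so irreducibility of `Ũ⁺` forces `N = 0` or `N = U`.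
-/

def Submodule.lieStabilizer (L : Type*) {k M : Type*} [CommRing k] [LieRing L]
    [LieAlgebra k L] [AddCommGroup M] [Module k M] [LieRingModule L M] [LieModule k L M]
    (N : Submodule k M) : LieSubalgebra k L where
  carrier := {x | ∀ u ∈ N, ⁅x, u⁆ ∈ N}
  add_mem' hx hy u hu := by rw [add_lie]; exact add_mem (hx u hu) (hy u hu)
  zero_mem' u _ := by rw [zero_lie]; exact zero_mem N
  smul_mem' t x hx u hu := by rw [smul_lie]; exact N.smul_mem t (hx u hu)
  lie_mem' hx hy u hu := by rw [lie_lie]; exact sub_mem (hx _ (hy u hu)) (hy _ (hx u hu))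

section LieModule

variable {k L M : Type*} [CommRing k] [LieRing L] [LieAlgebra k L]
  [AddCommGroup M] [Module k M] [LieRingModule L M] [LieModule k L M]

lemma lie_mem_of_mem_span {x : L} {s : Set M} {T : Submodule k M}
    (h : ∀ w ∈ s, ⁅x, w⁆ ∈ T) {u : M} (hu : u ∈ Submodule.span k s) : ⁅x, u⁆ ∈ T :=
  Submodule.span_le (p := T.comap (LieModule.toEnd k L M x)).mpr h hu

lemma mem_lieStabilizer_iSup {ι : Type*} {Q : ι → Submodule k M} {x : L}
    (h : ∀ i, ∀ u ∈ Q i, ⁅x, u⁆ ∈ ⨆ i, Q i) : x ∈ (⨆ i, Q i).lieStabilizer L :=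
  fun _ hu ↦ iSup_le (a := (⨆ i, Q i).comap (LieModule.toEnd k L M x)) h hu

end LieModule

namespace AssocGradedLieAlgebra

variable {k g V W L : Type*} [Field k] [LieRing g] [LieAlgebra k g]
  [AddCommGroup V] [Module k V] [AddCommGroup W] [Module k W] [LieRing L] [LieAlgebra k L]
  {P : PentadStruct k g V W} (A : AssocGradedLieAlgebra k g V W P L)

lemma lie_mem_of_add_eq {n m p : ℤ} (h : n + m = p) {x y : L} (hx : x ∈ A.grading n)
    (hy : y ∈ A.grading m) : ⁅x, y⁆ ∈ A.grading p :=
  h ▸ A.lie_mem n m x hx y hy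

lemma ιg_mem_grading_zero (a : g) : A.ιg a ∈ A.grading 0 :=
  A.ιg_range ▸ LinearMap.mem_range_self A.ιg a

lemma eq_top_of_grading_le (S : LieSubalgebra k L) (h₀ : A.grading 0 ≤ S.toSubmodule)
    (h₁ : A.grading 1 ≤ S.toSubmodule) (hneg : A.grading (-1) ≤ S.toSubmodule) : S = ⊤ := by
  have hall : ∀ n : ℤ, A.grading n ≤ S.toSubmodule := by
    intro n
    induction n using Int.induction_on with
    | zero => exact h₀
    | succ i ih =>
      rcases i.eq_zero_or_pos with rfl | hi
      · simpa using h₁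
      rw [A.span_pos i (by exact_mod_cast hi), Submodule.span_le]
      rintro _ ⟨x, hx, y, hy, rfl⟩
      exact S.lie_mem (h₁ hx) (ih hy)
    | pred i ih =>
      rcases i.eq_zero_or_pos with rfl | hi
      · simpa using hneg
      rw [A.span_neg i (by exact_mod_cast hi), Submodule.span_le]
      rintro _ ⟨x, hx, y, hy, rfl⟩
      exact S.lie_mem (hneg hx) (ih hy)
  rw [← LieSubalgebra.toSubmodule_eq_top, eq_top_iff, ← A.isInternal.submodule_iSup_eq_top]
  exact iSup_le hall

end AssocGradedLieAlgebra

namespace PositiveExtension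

variable {k g V W L M : Type*} [Field k] [LieRing g] [LieAlgebra k g]
  [AddCommGroup V] [Module k V] [AddCommGroup W] [Module k W] [LieRing L] [LieAlgebra k L]
  [AddCommGroup M] [Module k M] [LieRingModule L M] [LieModule k L M]
  {P : PentadStruct k g V W} {A : AssocGradedLieAlgebra k g V W P L}
  (E : PositiveExtension k g V W P L A M)

lemma lie_mem_of_add_eq {n m p : ℤ} (h : n + m = p) {x : L} {u : M} (hx : x ∈ A.grading n)
    (hu : u ∈ E.grading m) : ⁅x, u⁆ ∈ E.grading p :=
  h ▸ E.lie_mem n m x hx u hu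

lemma lie_eq_zero_of_mem_grading_zero {y : L} (hy : y ∈ A.grading (-1)) {u : M}
    (hu : u ∈ E.grading 0) : ⁅y, u⁆ = 0 := by
  have h := E.lie_mem_of_add_eq (p := -1) (by norm_num) hy hu
  rwa [E.zero_of_neg (-1) (by norm_num), Submodule.mem_bot] at h

lemma eq_top_of_grading_zero_le {N : Submodule k M}
    (hN : ∀ x ∈ A.grading 1, ∀ u ∈ N, ⁅x, u⁆ ∈ N) (h₀ : E.grading 0 ≤ N) : N = ⊤ := by
  have hnat : ∀ m : ℕ, E.grading m ≤ N := by
    intro m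
    induction m with
    | zero => simpa using h₀
    | succ m ih =>
      rw [Nat.cast_succ, E.span_step m m.cast_nonneg, Submodule.span_le]
      rintro _ ⟨x, hx, u, hu, rfl⟩
      exact hN x hx u (ih hu)
  have hall : ∀ n : ℤ, E.grading n ≤ N := by
    intro n
    rcases lt_or_ge n 0 with h | h
    · simp [E.zero_of_neg n h]
    · simpa [Int.toNat_of_nonneg h] using hnat n.toNat
  rw [eq_top_iff, ← E.isInternal.submodule_iSup_eq_top]
  exact iSup_le hall

lemma grading_zero_ne_bot (h : ∃ u : M, u ≠ 0) : E.grading 0 ≠ ⊥ := by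
  intro h₀
  obtain ⟨u, hu⟩ := h
  have hbot : (⊥ : Submodule k M) = ⊤ :=
    E.eq_top_of_grading_zero_le (fun _ _ u hu ↦ by simp [(Submodule.mem_bot k).1 hu]) h₀.le
  exact hu ((Submodule.mem_bot k).1 (hbot ▸ Submodule.mem_top))

lemma grading_zero_le_of_iSup_eq_top (Q : ℕ → Submodule k M) (hQ : ∀ m : ℕ, Q m ≤ E.grading m)
    (h : ⨆ m, Q m = ⊤) : E.grading 0 ≤ Q 0 := by
  have hpos : ⨆ m, Q (m + 1) ≤ ⨆ (n : ℤ) (_ : n ≠ 0), E.grading n :=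
    iSup_le fun m ↦ le_iSup₂_of_le ((m + 1 : ℕ) : ℤ) (by omega) (hQ (m + 1))
  have hdisj : (⨆ (n : ℤ) (_ : n ≠ 0), E.grading n) ⊓ E.grading 0 = ⊥ :=
    (E.isInternal.submodule_iSupIndep 0).symm.eq_bot
  calc E.grading 0 = (Q 0 ⊔ ⨆ m, Q (m + 1)) ⊓ E.grading 0 := by
        rw [sup_iSup_nat_succ, h, top_inf_eq]
    _ ≤ (Q 0 ⊔ ⨆ (n : ℤ) (_ : n ≠ 0), E.grading n) ⊓ E.grading 0 := by gcongr
    _ = Q 0 := by rw [sup_inf_assoc_of_le _ (by simpa using hQ 0), hdisj, sup_bot_eq]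

def filtration (t : ℤ) : Submodule k M :=
  ⨆ (n : ℤ) (_ : n ≤ t), E.grading n

lemma grading_le_filtration {n t : ℤ} (h : n ≤ t) : E.grading n ≤ E.filtration t :=
  le_iSup₂_of_le n h le_rfl

lemma filtration_mono : Monotone E.filtration :=
  fun _ _ h ↦ iSup₂_le fun _ hn ↦ E.grading_le_filtration (hn.trans h)

lemma filtration_zero_le : E.filtration 0 ≤ E.grading 0 :=
  iSup₂_le fun n hn ↦ by
    rcases hn.lt_or_eq with h | rfl
    · simp [E.zero_of_neg n h]
    · exact le_rfl

lemma filtration_succ_le (t : ℤ) : E.filtration (t + 1) ≤ E.filtration t ⊔ E.grading (t + 1) :=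
  iSup₂_le fun n hn ↦ by
    rcases hn.lt_or_eq with h | rfl
    · exact le_sup_of_le_left (E.grading_le_filtration (by omega))
    · exact le_sup_right

lemma grading_inf_filtration_pred (t : ℤ) : E.grading t ⊓ E.filtration (t - 1) = ⊥ :=
  ((E.isInternal.submodule_iSupIndep t).mono_right
    (iSup₂_le fun n hn ↦ le_iSup₂_of_le n (by omega) le_rfl)).eq_bot

lemma exists_mem_filtration (u : M) : ∃ m : ℕ, u ∈ E.filtration m := by
  have htop : ⨆ m : ℕ, E.filtration m = ⊤ := eq_top_iff.2 <| E.isInternal.submodule_iSup_eq_top ▸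
    iSup_le fun n ↦ le_iSup_of_le n.toNat (E.grading_le_filtration n.self_le_toNat)
  exact (Submodule.mem_iSup_of_directed _ (E.filtration_mono.comp
    Nat.mono_cast).directed_le).1 (htop ▸ Submodule.mem_top)

lemma lie_mem_filtration {y : L} (hy : y ∈ A.grading (-1)) {t : ℤ} {u : M}
    (hu : u ∈ E.filtration t) : ⁅y, u⁆ ∈ E.filtration (t - 1) :=
  iSup₂_le (a := (E.filtration (t - 1)).comap (LieModule.toEnd k L M y))
    (fun n hn _ hw ↦ E.grading_le_filtration (by omega) (E.lie_mem (-1) n y hy _ hw)) hu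

lemma mem_grading_zero_of_lie_eq_zero (m : ℕ) {u : M} (hu : u ∈ E.filtration m)
    (h : ∀ y ∈ A.grading (-1), ⁅y, u⁆ = 0) : u ∈ E.grading 0 := by
  induction m generalizing u with
  | zero => exact E.filtration_zero_le hu
  | succ m ih =>
    push_cast at hu
    obtain ⟨v, hv, w, hw, rfl⟩ := Submodule.mem_sup.1 (E.filtration_succ_le m hu)
    have hyw : ∀ y ∈ A.grading (-1), ⁅y, w⁆ = 0 := by
      intro y hy
      have hneg : ⁅y, w⁆ = -⁅y, v⁆ := eq_neg_of_add_eq_zero_right (lie_add y v w ▸ h y hy)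
      have hmem : ⁅y, w⁆ ∈ E.grading m ⊓ E.filtration (m - 1) :=
        ⟨E.lie_mem_of_add_eq (by ring) hy hw, hneg ▸ neg_mem (E.lie_mem_filtration hy hv)⟩
      rwa [E.grading_inf_filtration_pred, Submodule.mem_bot] at hmem
    obtain rfl : w = 0 := E.transitive (m + 1) (by omega) w hw hyw
    rw [add_zero] at h ⊢
    exact ih hv h

lemma eq_bot_of_inf_grading_zero_eq_bot {N : Submodule k M}
    (hN : ∀ y ∈ A.grading (-1), ∀ u ∈ N, ⁅y, u⁆ ∈ N) (h : N ⊓ E.grading 0 = ⊥) : N = ⊥ := by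
  refine eq_bot_iff.2 fun u hu ↦ ?_
  obtain ⟨m, hm⟩ := E.exists_mem_filtration u
  induction m generalizing u with
  | zero => exact h ▸ ⟨hu, E.filtration_zero_le hm⟩
  | succ m ih =>
    have hker : ∀ y ∈ A.grading (-1), ⁅y, u⁆ = 0 := fun y hy ↦
      (Submodule.mem_bot k).1 (ih _ (hN y hy u hu) (by simpa using E.lie_mem_filtration hy hm))
    exact h ▸ ⟨hu, E.mem_grading_zero_of_lie_eq_zero (m + 1) hm hker⟩

end PositiveExtension

namespace AssocGradedLieAlgebra

variable {k g V W L M : Type*} [Field k] [LieRing g] [LieAlgebra k g]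
  [AddCommGroup V] [Module k V] [AddCommGroup W] [Module k W] [LieRing L] [LieAlgebra k L]
  [AddCommGroup M] [Module k M] [LieRingModule L M]
  {P : PentadStruct k g V W} {A : AssocGradedLieAlgebra k g V W P L} {N : Submodule k M}

/-- `V₁ᵐ · N` -/
def raiseSpan (A : AssocGradedLieAlgebra k g V W P L) (N : Submodule k M) :
    ℕ → Submodule k M
  | 0 => N
  | m + 1 => Submodule.span k {w | ∃ x ∈ A.grading 1, ∃ u ∈ raiseSpan A N m, w = ⁅x, u⁆}

@[simp]
lemma raiseSpan_zero : A.raiseSpan N 0 = N := rfl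

lemma raiseSpan_succ (m : ℕ) : A.raiseSpan N (m + 1) =
    Submodule.span k {w | ∃ x ∈ A.grading 1, ∃ u ∈ A.raiseSpan N m, w = ⁅x, u⁆} := rfl

lemma lie_mem_raiseSpan_succ {m : ℕ} {x : L} (hx : x ∈ A.grading 1) {u : M}
    (hu : u ∈ A.raiseSpan N m) : ⁅x, u⁆ ∈ A.raiseSpan N (m + 1) :=
  Submodule.subset_span ⟨x, hx, u, hu, rfl⟩

variable [LieModule k L M]

lemma lie_mem_raiseSpan_of_mem_grading_zero (hN : ∀ x ∈ A.grading 0, ∀ u ∈ N, ⁅x, u⁆ ∈ N)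
    (m : ℕ) {x : L} (hx : x ∈ A.grading 0) {u : M} (hu : u ∈ A.raiseSpan N m) :
    ⁅x, u⁆ ∈ A.raiseSpan N m := by
  induction m generalizing x u with
  | zero => exact hN x hx u hu
  | succ m ih =>
    rw [raiseSpan_succ] at hu
    refine lie_mem_of_mem_span ?_ hu
    rintro _ ⟨x₁, hx₁, u₁, hu₁, rfl⟩
    rw [leibniz_lie]
    exact add_mem (lie_mem_raiseSpan_succ (A.lie_mem_of_add_eq (by norm_num) hx hx₁) hu₁)
      (lie_mem_raiseSpan_succ hx₁ (ih hx hu₁))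

end AssocGradedLieAlgebra

namespace PositiveExtension

open AssocGradedLieAlgebra

variable {k g V W L M : Type*} [Field k] [LieRing g] [LieAlgebra k g]
  [AddCommGroup V] [Module k V] [AddCommGroup W] [Module k W] [LieRing L] [LieAlgebra k L]
  [AddCommGroup M] [Module k M] [LieRingModule L M] [LieModule k L M]
  {P : PentadStruct k g V W} {A : AssocGradedLieAlgebra k g V W P L}
  (E : PositiveExtension k g V W P L A M) {N : Submodule k M}

lemma raiseSpan_le_grading (hN : N ≤ E.grading 0) (m : ℕ) : A.raiseSpan N m ≤ E.grading m := by
  induction m with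
  | zero => simpa using hN
  | succ m ih =>
    rw [raiseSpan_succ, Submodule.span_le]
    rintro _ ⟨x, hx, u, hu, rfl⟩
    exact E.lie_mem_of_add_eq (by push_cast; ring) hx (ih hu)

lemma lie_mem_raiseSpan_of_mem_grading_neg_one (hN : N ≤ E.grading 0)
    (hN₀ : ∀ x ∈ A.grading 0, ∀ u ∈ N, ⁅x, u⁆ ∈ N) (m : ℕ) {y : L} (hy : y ∈ A.grading (-1))
    {u : M} (hu : u ∈ A.raiseSpan N (m + 1)) : ⁅y, u⁆ ∈ A.raiseSpan N m := by
  rw [raiseSpan_succ] at hu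
  refine lie_mem_of_mem_span ?_ hu
  rintro _ ⟨x, hx, u₁, hu₁, rfl⟩
  rw [leibniz_lie]
  refine add_mem (lie_mem_raiseSpan_of_mem_grading_zero hN₀ m
    (A.lie_mem_of_add_eq (by norm_num) hy hx) hu₁) ?_
  cases m with
  | zero => simp [E.lie_eq_zero_of_mem_grading_zero hy (hN hu₁)]
  | succ m =>
    exact lie_mem_raiseSpan_succ hx (lie_mem_raiseSpan_of_mem_grading_neg_one hN hN₀ m hy hu₁)

lemma lie_mem_iSup_raiseSpan (hN : N ≤ E.grading 0)
    (hN₀ : ∀ x ∈ A.grading 0, ∀ u ∈ N, ⁅x, u⁆ ∈ N) (x : L) {u : M}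
    (hu : u ∈ ⨆ m, A.raiseSpan N m) : ⁅x, u⁆ ∈ ⨆ m, A.raiseSpan N m := by
  suffices (⨆ m, A.raiseSpan N m).lieStabilizer L = ⊤ from
    (this ▸ LieSubalgebra.mem_top x : x ∈ (⨆ m, A.raiseSpan N m).lieStabilizer L) u hu
  refine A.eq_top_of_grading_le _ (fun x hx ↦ ?_) (fun x hx ↦ ?_) (fun y hy ↦ ?_)
  · exact mem_lieStabilizer_iSup fun m _ hu ↦ Submodule.mem_iSup_of_mem m
      (lie_mem_raiseSpan_of_mem_grading_zero hN₀ m hx hu)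
  · exact mem_lieStabilizer_iSup fun m _ hu ↦ Submodule.mem_iSup_of_mem (m + 1)
      (lie_mem_raiseSpan_succ hx hu)
  · refine mem_lieStabilizer_iSup fun m u hu ↦ ?_
    cases m with
    | zero => simp [E.lie_eq_zero_of_mem_grading_zero hy (hN hu)]
    | succ m =>
      exact Submodule.mem_iSup_of_mem m (E.lie_mem_raiseSpan_of_mem_grading_neg_one hN hN₀ m hy hu)

end PositiveExtension

/-- Let `(g,ρ,V,𝒱,B₀)` be a standard pentad, `L = L(g,ρ,V,𝒱,B₀)`, and
`(π, U)` a `g`-module with positive extension `Ũ⁺ = ⊕_{m≥0} U⁺ₘ` (an `L`-module, with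
`U⁺₀ = U`).  Then `Ũ⁺` is irreducible as an `L`-module if and only if `U` is irreducible as a
`g`-module. -/
theorem statement15
    {k g V W L M : Type*} [Field k] [LieRing g] [LieAlgebra k g]
    [AddCommGroup V] [Module k V] [AddCommGroup W] [Module k W]
    [LieRing L] [LieAlgebra k L]
    [AddCommGroup M] [Module k M] [LieRingModule L M] [LieModule k L M]
    (P : PentadStruct k g V W)
    (A : AssocGradedLieAlgebra k g V W P L)
    (E : PositiveExtension k g V W P L A M) :
    -- `Ũ⁺` is an irreducible `L`-module
    ((∃ u : M, u ≠ 0) ∧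
      ∀ N : Submodule k M, (∀ x : L, ∀ u ∈ N, ⁅x, u⁆ ∈ N) → N = ⊥ ∨ N = ⊤)
    ↔
    -- if and only if `U = U⁺₀` is an irreducible `g`-module (`g` acting through `ιg : g → L`)
    (E.grading 0 ≠ ⊥ ∧
      ∀ N : Submodule k M, N ≤ E.grading 0 → (∀ a : g, ∀ u ∈ N, ⁅A.ιg a, u⁆ ∈ N) →
        N = ⊥ ∨ N = E.grading 0) := by
  constructor
  · rintro ⟨hM, hirr⟩
    refine ⟨E.grading_zero_ne_bot hM, fun N hN hNg ↦ ?_⟩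
    have hN₀ : ∀ x ∈ A.grading 0, ∀ u ∈ N, ⁅x, u⁆ ∈ N := by
      rintro _ hx
      obtain ⟨a, rfl⟩ := LinearMap.mem_range.1 (A.ιg_range ▸ hx)
      exact hNg a
    refine (hirr _ (E.lie_mem_iSup_raiseSpan hN hN₀)).imp (fun h ↦ ?_) (fun h ↦ ?_)
    · exact eq_bot_iff.2 (h ▸ le_iSup (A.raiseSpan N) 0)
    · exact hN.antisymm (E.grading_zero_le_of_iSup_eq_top _ (E.raiseSpan_le_grading hN) h)
  · rintro ⟨hU, hirr⟩
    refine ⟨(Submodule.ne_bot_iff _).1 hU |>.imp fun _ ↦ And.right, fun N hN ↦ ?_⟩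
    refine or_iff_not_imp_left.2 fun hbot ↦ E.eq_top_of_grading_zero_le (fun x _ ↦ hN x) ?_
    have hstab : ∀ a : g, ∀ u ∈ N ⊓ E.grading 0, ⁅A.ιg a, u⁆ ∈ N ⊓ E.grading 0 :=
      fun a u hu ↦ ⟨hN _ u hu.1, E.lie_mem_of_add_eq (zero_add 0) (A.ιg_mem_grading_zero a) hu.2⟩
    have hNU := (hirr _ inf_le_right hstab).resolve_left
      (mt (E.eq_bot_of_inf_grading_zero_eq_bot fun y _ ↦ hN y) hbot)
    exact inf_eq_right.1 hNU
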